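/- arXiv:1708.08292 — 12 statements merged into one kernel-verified Lean document; each statement's English description precedes it below -/
import Mathlib

section
/- Let D be a finite set, σ a signature with operation symbols o_1,…,o_k of arities n_1,…,n_k, and B a set of algebras over D with signature σ. Let ρ ⊆ D^p be a relation and (A_1,…,A_p) ∈ ρ^B. Define the lifted relation ρ(A_1,…,A_p) = {((A_1,y_1),…,(A_p,y_p)) : (y_1,…,y_p) ∈ ρ} ⊆ (B × D)^p, and for each i ∈ [k] define m_i : (B × D)^{n_i} → B × D by m_i((C_1,x_1),…,(C_{n_i},x_{n_i})) = (C_1, o_i^{C_1}(x_1,…,x_{n_i})). Then for every i ∈ [k], m_i is a polymorphism of ρ(A_1,…,A_p), i.e. (m_i,…,m_i) componentwise preserves ρ(A_1,…,A_p). -/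
/-- An algebra over `D` with `k` operation symbols, the `i`-th of arity `ar i`. -/
abbrev Alg (D : Type*) (k : ℕ) (ar : Fin k → ℕ) : Type _ :=
  (i : Fin k) → (Fin (ar i) → D) → D

/-- A family of `n`-ary operations `f j : E^n → E` (one for each coordinate `j`)
componentwise preserves a relation `ρ ⊆ E^ι`. -/
def CWPreserves {E ι : Type*} {n : ℕ} (f : ι → (Fin n → E) → E)
    (ρ : Set (ι → E)) : Prop :=
  ∀ M : Fin n → ι → E, (∀ t, M t ∈ ρ) → (fun j => f j fun t => M t j) ∈ ρ

/-- `f` is a polymorphism of `ρ` iff `(f,…,f)` componentwise preserves `ρ`. -/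
def IsPolymorphism {E ι : Type*} {n : ℕ} (f : (Fin n → E) → E) (ρ : Set (ι → E)) : Prop :=
  CWPreserves (fun _ => f) ρ

/-- The relation `ρ^B`. -/
def relB {D : Type*} {k : ℕ} {ar : Fin k → ℕ} (B : Set (Alg D k ar)) {m : ℕ}
    (ρ : Set (Fin m → D)) : Set (Fin m → Alg D k ar) :=
  {A | (∀ j, A j ∈ B) ∧ ∀ i : Fin k, CWPreserves (fun j => A j i) ρ}

/-- For `(A₁,…,A_p) ∈ ρ^B`, each operation
`mᵢ((C₁,x₁),…,(C_{nᵢ},x_{nᵢ})) = (C₁, o_i^{C₁}(x₁,…,x_{nᵢ}))` is a polymorphism of the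
lifted relation `ρ(A₁,…,A_p) = {((A₁,y₁),…,(A_p,y_p)) : y ∈ ρ}`. -/
theorem stmt1 {D : Type*} [Fintype D] {k : ℕ} {ar : Fin k → ℕ}
    (har : ∀ i, 0 < ar i)
    (B : Set (Alg D k ar)) {p : ℕ} (ρ : Set (Fin p → D))
    (As : Fin p → Alg D k ar) (hAs : As ∈ relB B ρ) (i : Fin k) :
    IsPolymorphism
      (fun cs : Fin (ar i) → Alg D k ar × D =>
        ((cs ⟨0, har i⟩).1, (cs ⟨0, har i⟩).1 i fun t => (cs t).2))
      {w : Fin p → Alg D k ar × D | ∃ y ∈ ρ, ∀ j, w j = (As j, y j)} := by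
  intro M hM
  choose y hy hyeq using hM
  refine ⟨fun j => As j i fun t => y t j, hAs.2 i y hy, fun j => ?_⟩
  simp only [hyeq]
end

section
/- Let D be a finite set and σ a signature with operation symbols o_1,…,o_k of arities n_1,…,n_k. Fix N ∈ ℕ and a set E of identities, each identity given by indices u, v ∈ [k] together with maps α : [n_u] → [N] and β : [n_v] → [N]; say an algebra A over D satisfies the identity (u,v,α,β) if o_u^A(x_{α(1)},…,x_{α(n_u)}) = o_v^A(x_{β(1)},…,x_{β(n_v)}) for all x_1,…,x_N ∈ D. Let B be the set of all algebras over D satisfying every identity in E. Then for every n and every f : D^n → D, f^{A} preserves B: if A_1,…,A_n ∈ B then f^{A}(A_1,…,A_n) ∈ B. -/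
/-- The lift `f^𝒜` of an operation `f : D^n → D` to algebras:
`o_j^{f^𝒜(A₁,…,Aₙ)}(x⃗) = f(o_j^{A₁}(x⃗),…,o_j^{Aₙ}(x⃗))`. -/
def liftOp {D : Type*} {k : ℕ} {ar : Fin k → ℕ} {n : ℕ}
    (f : (Fin n → D) → D) (As : Fin n → Alg D k ar) : Alg D k ar :=
  fun j x => f fun t => As t j x

/-- If `B` is the set of all algebras over `D` satisfying a prescribed set `E` of identities
of the form `o_u(x_{α(1)},…,x_{α(n_u)}) = o_v(x_{β(1)},…,x_{β(n_v)})`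
(with variables among `x_1,…,x_N`), then for every `f : D^n → D` the lifted operation `f^𝒜`
preserves `B`. -/
theorem stmt3 {D : Type*} [Fintype D] {k N : ℕ} {ar : Fin k → ℕ}
    (E : Set (Σ u : Fin k, Σ v : Fin k, (Fin (ar u) → Fin N) × (Fin (ar v) → Fin N)))
    (B : Set (Alg D k ar))
    (hBdef : ∀ A : Alg D k ar, A ∈ B ↔
      ∀ e ∈ E, ∀ x : Fin N → D,
        A e.1 (fun t => x (e.2.2.1 t)) = A e.2.1 (fun t => x (e.2.2.2 t)))
    {n : ℕ} (f : (Fin n → D) → D)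
    (As : Fin n → Alg D k ar) (hAs : ∀ t, As t ∈ B) :
    liftOp f As ∈ B := by
  rw [hBdef]
  intro e he x
  simp only [liftOp]
  congr 1
  funext t
  exact (hBdef (As t)).1 (hAs t) e he x
end

section
/- Let D be a finite set, σ a signature with operation symbols o_1,…,o_k of arities n_1,…,n_k, Γ = (D, ρ_1,…,ρ_s) a template over D, and B a set of algebras over D with signature σ. Suppose f : D^n → D is a polymorphism of every relation of Γ and f^{A} preserves B (f^{A}(A_1,…,A_n) ∈ B whenever A_1,…,A_n ∈ B). Then the restriction of f^{A} to B is a polymorphism of Γ^B: for every l ∈ [s] with ρ_l of arity m, if (A^1_1,…,A^1_m),…,(A^n_1,…,A^n_m) ∈ ρ_l^B, then (f^{A}(A^1_1,…,A^n_1),…,f^{A}(A^1_m,…,A^n_m)) ∈ ρ_l^B. -/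
/-- If `f` is a polymorphism of every relation of `Γ` and `f^𝒜` preserves `B`, then the
restriction of `f^𝒜` to `B` is a polymorphism of `Γ^B`: applying `f^𝒜` columnwise to `n`
tuples of `ρ_l^B` yields a tuple of `ρ_l^B`. -/
theorem stmt4 {D : Type*} [Fintype D] {k s : ℕ} {ar : Fin k → ℕ} {mr : Fin s → ℕ}
    (ρ : (l : Fin s) → Set (Fin (mr l) → D))
    (B : Set (Alg D k ar))
    {n : ℕ} (f : (Fin n → D) → D)
    (hf : ∀ l, IsPolymorphism f (ρ l))
    (hB : ∀ As : Fin n → Alg D k ar, (∀ t, As t ∈ B) → liftOp f As ∈ B) :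
    ∀ l, ∀ M : Fin n → Fin (mr l) → Alg D k ar,
      (∀ t, M t ∈ relB B (ρ l)) →
      (fun j => liftOp f fun t => M t j) ∈ relB B (ρ l) := by
  intro l M hM
  constructor
  · intro j
    exact hB (fun t => M t j) (fun t => (hM t).1 j)
  · intro i N hN
    exact hf l (fun t j => M t j i fun x => N x j) (fun t => (hM t).2 i N hN)
end

section
/- Let D be a finite set, σ a signature with operation symbols o_1,…,o_k of arities n_1,…,n_k, Γ = (D, ρ_1,…,ρ_s) a template, and B a set of algebras over D with signature σ. Let f = (f_{αβ})_{α∈[k], β∈[n_α]} be a system of operations with f_{αβ} : D^{n_α} → D, each a polymorphism of every relation of Γ. Define the unary operation a_f on algebras over D by a_f(A) = A', where o_α^{A'}(x_1,…,x_{n_α}) = o_α^A(f_{α1}(x_1,…,x_{n_α}),…,f_{αn_α}(x_1,…,x_{n_α})) for each α ∈ [k]. If a_f preserves B (a_f(A) ∈ B for all A ∈ B), then a_f is an endomorphism of Γ^B: for every l ∈ [s] with ρ_l of arity m, (A_1,…,A_m) ∈ ρ_l^B implies (a_f(A_1),…,a_f(A_m)) ∈ ρ_l^B. -/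
/-- The unary operation `a_f` built from a system `f = (f_{αβ})` of operations,
plugging the `f_{αβ}` inside the basic operations:
`o_α^{a_f(A)}(x⃗) = o_α^A(f_{α1}(x⃗),…,f_{α n_α}(x⃗))`. -/
def aF {D : Type*} {k : ℕ} {ar : Fin k → ℕ}
    (f : (α : Fin k) → Fin (ar α) → (Fin (ar α) → D) → D)
    (A : Alg D k ar) : Alg D k ar :=
  fun α x => A α fun β => f α β x

/-- Endomorphisms of the first kind: if each `f_{αβ}` is a polymorphism of every relation
of `Γ` and `a_f` preserves `B`, then `a_f` is an endomorphism of `Γ^B`. -/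
theorem stmt7 {D : Type*} [Fintype D] {k s : ℕ} {ar : Fin k → ℕ} {mr : Fin s → ℕ}
    (ρ : (l : Fin s) → Set (Fin (mr l) → D))
    (B : Set (Alg D k ar))
    (f : (α : Fin k) → Fin (ar α) → (Fin (ar α) → D) → D)
    (hf : ∀ α β l, IsPolymorphism (f α β) (ρ l))
    (hB : ∀ A ∈ B, aF f A ∈ B) :
    ∀ l, ∀ As ∈ relB B (ρ l), (fun j => aF f (As j)) ∈ relB B (ρ l) := by
  intro l As hAs
  obtain ⟨hmem, hcw⟩ := hAs
  refine ⟨fun j => hB _ (hmem j), fun i M hM => ?_⟩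
  have hrow : ∀ β : Fin (ar i), (fun j => f i β fun t => M t j) ∈ ρ l :=
    fun β => hf i β l M hM
  exact hcw i (fun β j => f i β fun t => M t j) hrow
end

section
/- Let D be a finite set, σ a signature with operation symbols o_1,…,o_k of arities n_1,…,n_k, Γ = (D, ρ_1,…,ρ_s) a template, and B a set of algebras over D with signature σ. Fix α ∈ [k] and let b : D^{n_α + 1} → D be a polymorphism of every relation of Γ. Define the unary operation a_{α,b} on algebras over D by a_{α,b}(A) = A', where o_β^{A'} = o_β^A for every β ≠ α and o_α^{A'}(x_1,…,x_{n_α}) = b(o_α^A(x_1,…,x_{n_α}), x_1,…,x_{n_α}). If a_{α,b} preserves B (a_{α,b}(A) ∈ B for all A ∈ B), then a_{α,b} is an endomorphism of Γ^B: for every l ∈ [s] with ρ_l of arity m, (A_1,…,A_m) ∈ ρ_l^B implies (a_{α,b}(A_1),…,a_{α,b}(A_m)) ∈ ρ_l^B. -/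
/-- The unary operation `a_{α,b}`: it keeps all basic operations of `A` except the `α`-th,
which is replaced by `x⃗ ↦ b(o_α^A(x⃗), x₁, …, x_{n_α})`. -/
def aAB {D : Type*} {k : ℕ} {ar : Fin k → ℕ} (α : Fin k)
    (b : (Fin (ar α + 1) → D) → D) (A : Alg D k ar) : Alg D k ar :=
  Function.update A α fun x => b (Fin.cons (A α x) x)

/-- Endomorphisms of the second kind: if `b` is a polymorphism of every relation of `Γ`
and `a_{α,b}` preserves `B`, then `a_{α,b}` is an endomorphism of `Γ^B`. -/
theorem stmt8 {D : Type*} [Fintype D] {k s : ℕ} {ar : Fin k → ℕ} {mr : Fin s → ℕ}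
    (ρ : (l : Fin s) → Set (Fin (mr l) → D))
    (B : Set (Alg D k ar))
    (α : Fin k) (b : (Fin (ar α + 1) → D) → D)
    (hb : ∀ l, IsPolymorphism b (ρ l))
    (hB : ∀ A ∈ B, aAB α b A ∈ B) :
    ∀ l, ∀ As ∈ relB B (ρ l), (fun j => aAB α b (As j)) ∈ relB B (ρ l) := by
  intro l As hAs
  obtain ⟨hmem, hcw⟩ := hAs
  refine ⟨fun j => hB _ (hmem j), fun i => ?_⟩
  by_cases hiα : i = α
  · subst hiα
    intro M hM
    set r : Fin (mr l) → D := fun j => As j i fun t => M t j with hr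
    have hrρ : r ∈ ρ l := hcw i M hM
    set N : Fin (ar i + 1) → Fin (mr l) → D := Fin.cons r M with hN
    have hNρ : ∀ t, N t ∈ ρ l := by
      intro t
      refine Fin.cases ?_ ?_ t
      · simpa [hN] using hrρ
      · intro t'; simpa [hN] using hM t'
    have key := hb l N hNρ
    have heq : (fun j => aAB i b (As j) i fun t => M t j)
        = (fun j => b fun t => N t j) := by
      funext j
      simp only [aAB, Function.update_self]
      congr 1
      funext t
      refine Fin.cases ?_ ?_ t <;> simp [hN, hr]
    rw [heq]
    exact key
  · intro M hM
    have heq : (fun j => aAB α b (As j) i fun t => M t j)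
        = (fun j => As j i fun t => M t j) := by
      funext j
      simp [aAB, Function.update_of_ne hiα]
    rw [heq]
    exact hcw i M hM
end

section
/- Let B = {a, b} be a two-element set. A ternary operation m : B³ → B is the operation of one of the four algebras in M_B = {(B, μ_B), (B, μ'_B), (B, c_a), (B, c_b)} if and only if there exists u : B → B such that m(x,x,y) = m(x,y,x) = m(y,x,x) = u(y) for all x, y ∈ B. (This is the content of the theorem that the trace Tr(M_B) is primitive-positive definable over {B, eq}.) -/
/-- On a two-element set `B = {a,b}`, a ternary operation `m` belongs to
`M_B = {μ_B, μ'_B, c_a, c_b}` (minority, anti-minority, and the two constants)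
iff there exists `u : B → B` with `m(x,x,y) = m(x,y,x) = m(y,x,x) = u(y)` for all `x,y`.
(This is the content of the pp-definability of the trace `Tr(M_B)` over `{B, eq}`.) -/
theorem stmt9 {B : Type*} (a b : B) (hab : a ≠ b) (hcover : ∀ x : B, x = a ∨ x = b)
    (m : B → B → B → B) :
    ((∀ x y : B, m x x y = y ∧ m x y x = y ∧ m y x x = y) ∨
     (∀ μ : B → B → B → B, (∀ x y : B, μ x x y = y ∧ μ x y x = y ∧ μ y x x = y) →
        ∀ x y z : B, m x y z ≠ μ x y z) ∨
     (∀ x y z : B, m x y z = a) ∨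
     (∀ x y z : B, m x y z = b))
    ↔ ∃ u : B → B, ∀ x y : B, m x x y = u y ∧ m x y x = u y ∧ m y x x = u y := by
  classical
  have two_ne : ∀ s t y : B, s ≠ y → t ≠ y → s = t := by
    intro s t y hs ht
    rcases hcover s with rfl | rfl <;> rcases hcover t with rfl | rfl <;>
      rcases hcover y with rfl | rfl <;> simp_all
  have pigeon : ∀ x y z : B, x = y ∨ x = z ∨ y = z := by
    intro x y z
    rcases hcover x with rfl | rfl <;> rcases hcover y with rfl | rfl <;>
      rcases hcover z with rfl | rfl <;> simp_all
  constructor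
  · rintro (h | h | h | h)
    · exact ⟨fun y => y, fun x y => h x y⟩
    · -- anti-minority case: build a minority operation μ
      set μ : B → B → B → B := fun x y z =>
        if x = y then z else if x = z then y else x with hμ
      have hmin : ∀ x y : B, μ x x y = y ∧ μ x y x = y ∧ μ y x x = y := by
        intro x y
        refine ⟨by simp [hμ], ?_, ?_⟩
        · by_cases hxy : x = y
          · subst hxy; simp [hμ]
          · simp [hμ, hxy]
        · by_cases hxy : y = x
          · subst hxy; simp [hμ]
          · simp [hμ, hxy]
      have hd := h μ hmin
      refine ⟨fun y => m a a y, fun x y => ?_⟩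
      have h1 : m x x y ≠ y := by
        have := hd x x y; rwa [(hmin x y).1] at this
      have h2 : m x y x ≠ y := by
        have := hd x y x; rwa [(hmin x y).2.1] at this
      have h3 : m y x x ≠ y := by
        have := hd y x x; rwa [(hmin x y).2.2] at this
      have h0 : m a a y ≠ y := by
        have := hd a a y; rwa [(hmin a y).1] at this
      exact ⟨two_ne _ _ _ h1 h0, two_ne _ _ _ h2 h0, two_ne _ _ _ h3 h0⟩
    · exact ⟨fun _ => a, fun x y => ⟨h x x y, h x y x, h y x x⟩⟩
    · exact ⟨fun _ => b, fun x y => ⟨h x x y, h x y x, h y x x⟩⟩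
  · rintro ⟨u, hu⟩
    rcases hcover (u a) with hua | hua <;> rcases hcover (u b) with hub | hub
    · -- u = const a
      refine Or.inr (Or.inr (Or.inl ?_))
      have huc : ∀ y, u y = a := by
        intro y; rcases hcover y with rfl | rfl <;> assumption
      intro x y z
      rcases pigeon x y z with rfl | rfl | rfl
      · rw [(hu x z).1, huc]
      · rw [(hu x y).2.1, huc]
      · rw [(hu y x).2.2, huc]
    · -- u = id
      refine Or.inl ?_
      have huc : ∀ y, u y = y := by
        intro y; rcases hcover y with rfl | rfl <;> assumption
      intro x y
      exact ⟨by rw [(hu x y).1, huc], by rw [(hu x y).2.1, huc],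
        by rw [(hu x y).2.2, huc]⟩
    · -- u = swap : anti-minority
      refine Or.inr (Or.inl ?_)
      have huc : ∀ y, u y ≠ y := by
        intro y; rcases hcover y with rfl | rfl
        · rw [hua]; exact hab.symm
        · rw [hub]; exact hab
      intro μ hμ x y z
      rcases pigeon x y z with rfl | rfl | rfl
      · rw [(hu x z).1, (hμ x z).1]; exact huc z
      · rw [(hu x y).2.1, (hμ x y).2.1]; exact huc y
      · rw [(hu y x).2.2, (hμ y x).2.2]; exact huc x
    · -- u = const b
      refine Or.inr (Or.inr (Or.inr ?_))
      have huc : ∀ y, u y = b := by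
        intro y; rcases hcover y with rfl | rfl <;> assumption
      intro x y z
      rcases pigeon x y z with rfl | rfl | rfl
      · rw [(hu x z).1, huc]
      · rw [(hu x y).2.1, huc]
      · rw [(hu y x).2.2, huc]
end

section
/- Let D be a finite set, σ a signature with operation symbols o_1,…,o_k of arities n_1,…,n_k, Γ = (D, ρ_1,…,ρ_s) a template, B a set of algebras over D with signature σ, and R = (V, r_1,…,r_s) a relational structure of the same signature as Γ. For a homomorphism h : R → Γ^B, define u_h : V → ∏_{(i,x⃗)} D (coordinates indexed by i ∈ [k] and x⃗ ∈ D^{n_i}) by u_h(v)(i, x⃗) = o_i^{h(v)}(x⃗). Then h ↦ u_h is a bijection from the set of homomorphisms R → Γ^B onto the set of functions u : V → ∏_{(i,x⃗)} D satisfying: (i) for every v ∈ V there exists A ∈ B with u(v)(i,x⃗) = o_i^A(x⃗) for all i, x⃗ (i.e. u(v) ∈ Tr(B)); and (ii) for every l ∈ [s], every (v_1,…,v_p) ∈ r_l, every i ∈ [k], and all x̄_1,…,x̄_p ∈ D^{n_i} such that (x̄_1(t),…,x̄_p(t)) ∈ ρ_l for every t ∈ [n_i], one has (u(v_1)(i,x̄_1),…,u(v_p)(i,x̄_p))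 ∈ ρ_l. -/
/-- The map `h ↦ u_h`, `u_h(v)(i,x⃗) = o_i^{h(v)}(x⃗)`, is a bijection from the set of
homomorphisms `R → Γ^B` onto the set of `u : V → ∏_{(i,x⃗)} D` such that
(i) every `u(v)` is the operation table of some algebra of `B` (i.e. `u(v) ∈ Tr(B)`), and
(ii) for every constraint `(v₁,…,v_p) ∈ r_l`, every `i` and all `x̄₁,…,x̄_p ∈ D^{n_i}`
whose rows lie in `ρ_l`, the tuple `(u(v₁)(i,x̄₁),…,u(v_p)(i,x̄_p))` lies in `ρ_l`. -/
theorem stmt10 {D V : Type*} [Fintype D] [Fintype V] {k s : ℕ}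
    {ar : Fin k → ℕ} {mr : Fin s → ℕ}
    (B : Set (Alg D k ar))
    (ρ : (l : Fin s) → Set (Fin (mr l) → D))
    (r : (l : Fin s) → Set (Fin (mr l) → V)) :
    Set.BijOn
      (fun (h : V → Alg D k ar) => fun v (pr : Σ i : Fin k, Fin (ar i) → D) => h v pr.1 pr.2)
      {h | (∀ v, h v ∈ B) ∧ ∀ l, ∀ v ∈ r l, (fun t => h (v t)) ∈ relB B (ρ l)}
      {u : V → (Σ i : Fin k, Fin (ar i) → D) → D |
        (∀ v, ∃ A ∈ B, ∀ (i : Fin k) (x : Fin (ar i) → D), u v ⟨i, x⟩ = A i x) ∧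
        ∀ l, ∀ v ∈ r l, ∀ i : Fin k, ∀ X : Fin (mr l) → Fin (ar i) → D,
          (∀ t : Fin (ar i), (fun j => X j t) ∈ ρ l) →
          (fun j => u (v j) ⟨i, X j⟩) ∈ ρ l} := by
  refine ⟨?_, ?_, ?_⟩
  · rintro h ⟨hB, hhom⟩
    refine ⟨fun v => ⟨h v, hB v, fun i x => rfl⟩, ?_⟩
    intro l v hv i X hX
    exact (hhom l v hv).2 i (fun t j => X j t) hX
  · rintro h₁ _ h₂ _ he
    funext v i x
    exact congrFun (congrFun he v) ⟨i, x⟩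
  · rintro u ⟨hTr, hc⟩
    choose A hA hAeq using hTr
    refine ⟨fun v => A v, ⟨hA, ?_⟩, ?_⟩
    · intro l v hv
      refine ⟨fun j => hA (v j), fun i M hM => ?_⟩
      have := hc l v hv i (fun j t => M t j) (fun t => hM t)
      simpa [hAeq] using this
    · funext v pr
      cases pr with
      | mk i x => exact (hAeq v i x).symm
end

section
/- Let D be a finite set and ρ ⊆ D^m a relation all of whose coordinate projections P_k(ρ) = {t_k : t ∈ ρ} have at most two elements. Let f : D² → D be a polymorphism of ρ, let R ⊆ [m], and for each k ∈ R write P_k(ρ) = {a_k, b_k}. Assume: for every k ∈ R, f(a_k,a_k) = a_k, f(b_k,b_k) = b_k and f(a_k,b_k) = f(b_k,a_k) = a_k; and for every k ∉ R, f(x,y) = x for all x, y ∈ P_k(ρ). Then for every t ∈ ρ, the tuple t' defined by t'_k = a_k for k ∈ R and t'_k = t_k for k ∉ R belongs to ρ; equivalently {(a_k)_{k∈R}} × P_{[m]∖R}(ρ) ⊆ ρ. -/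
/-- Lemma on red coordinates: if every coordinate projection of `ρ` has at most two
elements, `f` is a binary polymorphism of `ρ`, `R` is a set of coordinates on which the
projection is `{a_k, b_k}` and `f` behaves as the semilattice with absorbing element `a_k`,
while off `R` the operation `f` is the first projection on the corresponding projections,
then replacing the `R`-coordinates of any tuple of `ρ` by the elements `a_k` again gives a
tuple of `ρ`; i.e. `{(a_k)_{k∈R}} × P_{[m]∖R}(ρ) ⊆ ρ`. -/
theorem stmt11 {D : Type*} [Fintype D] {m : ℕ}
    (ρ : Set (Fin m → D))
    (hproj : ∀ j : Fin m, ∃ x y : D, ∀ t ∈ ρ, t j = x ∨ t j = y)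
    (f : D → D → D)
    (hpoly : ∀ s ∈ ρ, ∀ t ∈ ρ, (fun j => f (s j) (t j)) ∈ ρ)
    (R : Finset (Fin m)) (a b : Fin m → D)
    (hab : ∀ j ∈ R, a j ≠ b j)
    (hcover : ∀ j ∈ R, ∀ t ∈ ρ, t j = a j ∨ t j = b j)
    (hatt_a : ∀ j ∈ R, ∃ t ∈ ρ, t j = a j)
    (hatt_b : ∀ j ∈ R, ∃ t ∈ ρ, t j = b j)
    (hfR : ∀ j ∈ R, f (a j) (a j) = a j ∧ f (b j) (b j) = b j ∧
      f (a j) (b j) = a j ∧ f (b j) (a j) = a j)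
    (hfnR : ∀ j ∉ R, ∀ s ∈ ρ, ∀ t ∈ ρ, f (s j) (t j) = s j) :
    ∀ t ∈ ρ, (fun j => if j ∈ R then a j else t j) ∈ ρ := by
  intro t ht
  -- key claim by induction on subsets S of R
  have key : ∀ S : Finset (Fin m), S ⊆ R →
      ∃ u ∈ ρ, (∀ k ∈ S, u k = a k) ∧ (∀ k ∉ R, u k = t k) := by
    intro S
    induction S using Finset.induction_on with
    | empty =>
      intro _
      exact ⟨t, ht, by simp, fun k _ => rfl⟩
    | @insert j S hj ih =>
      intro hSR
      have hjR : j ∈ R := hSR (Finset.mem_insert_self j S)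
      obtain ⟨u, hu, huS, huR⟩ := ih (fun k hk => hSR (Finset.mem_insert_of_mem hk))
      obtain ⟨s, hs, hsj⟩ := hatt_a j hjR
      refine ⟨fun k => f (u k) (s k), hpoly u hu s hs, ?_, ?_⟩
      · intro k hk
        show f (u k) (s k) = a k
        rcases Finset.mem_insert.mp hk with rfl | hkS
        · rcases hcover k hjR u hu with h | h <;>
            rw [h, hsj] <;> [exact (hfR k hjR).1; exact (hfR k hjR).2.2.2]
        · have hkR : k ∈ R := hSR (Finset.mem_insert_of_mem hkS)
          rw [huS k hkS]
          rcases hcover k hkR s hs with h | h <;>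
            rw [h] <;> [exact (hfR k hkR).1; exact (hfR k hkR).2.2.1]
      · intro k hk
        show f (u k) (s k) = t k
        rw [hfnR k hk u hu s hs, huR k hk]
  obtain ⟨u, hu, huS, huR⟩ := key R (le_refl _)
  have : (fun j => if j ∈ R then a j else t j) = u := by
    funext k
    by_cases hk : k ∈ R
    · simp [hk, (huS k hk).symm]
    · simp [hk, (huR k hk).symm]
  rw [this]
  exact hu
end

section
/- Let D be a finite set and ρ ⊆ D^m a relation all of whose coordinate projections B_j = P_j(ρ) have at most two elements. Suppose a subset of the two-element sets B_j is designated 'red', and f : D² → D is a polymorphism of ρ such that: for each red B_j = {a_j, b_j} (with labels chosen so that f(a_j,b_j) = a_j), f(a_j,a_j) = a_j, f(b_j,b_j) = b_j and f(a_j,b_j) = f(b_j,a_j) = a_j; and for each non-red B_j, f(x,y) = x for all x,y ∈ B_j. For each j let M_{B_j} be as defined below, and define e_1 : M_{B_j} → M_{B_j} by e_1(A) = A if B_j is not red, and e_1(A) = (B_j, c_{a_j}) (the constant-a_j algebra) if B_j is red. Then, whenever (A_1,…,A_m) with A_j ∈ M_{B_j} is such that the tuple of ternary operations (o^{A_1},…,o^{A_m})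 componentwise preserves ρ, the tuple (o^{e_1(A_1)},…,o^{e_1(A_m)}) also componentwise preserves ρ. (Hence e_1 is an endomorphism of Γ^M.) -/
/-- The minority operation on a two-element set: for arguments from a two-element set this
yields the value occurring an odd number of times. -/
def minoFun {D : Type*} [DecidableEq D] (x y z : D) : D :=
  if x = y then z else if y = z then x else y

/-- The simplification `e₁` is an endomorphism of `Γ^M`: with each coordinate projection
`B_j ⊆ {a_j, b_j}`, red coordinates `Red`, a polymorphism `f` of `ρ` that is the semilattice
with absorbing element `a_j` on red `B_j` and the first projection on non-red `B_j`,
if a tuple `(A_1,…,A_m)` of algebras `A_j ∈ M_{B_j}` componentwise preserves `ρ`, then so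
does the tuple `(e₁(A_1),…,e₁(A_m))`, where `e₁` replaces the operation at each red
coordinate by the constant `a_j` and is the identity elsewhere. -/
theorem stmt12 {D : Type*} [Fintype D] [DecidableEq D] {m : ℕ}
    (ρ : Set (Fin m → D)) (a b : Fin m → D)
    (hcover : ∀ j : Fin m, ∀ t ∈ ρ, t j = a j ∨ t j = b j)
    (Red : Finset (Fin m))
    (hred2 : ∀ j ∈ Red, a j ≠ b j ∧ (∃ t ∈ ρ, t j = a j) ∧ ∃ t ∈ ρ, t j = b j)
    (f : D → D → D)
    (hpoly : ∀ s ∈ ρ, ∀ t ∈ ρ, (fun j => f (s j) (t j)) ∈ ρ)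
    (hfR : ∀ j ∈ Red, f (a j) (a j) = a j ∧ f (b j) (b j) = b j ∧
      f (a j) (b j) = a j ∧ f (b j) (a j) = a j)
    (hfnR : ∀ j ∉ Red, ∀ x ∈ ({a j, b j} : Set D), ∀ y ∈ ({a j, b j} : Set D), f x y = x)
    (o : Fin m → D → D → D → D)
    (hM : ∀ j : Fin m,
      (∀ x ∈ ({a j, b j} : Set D), ∀ y ∈ ({a j, b j} : Set D), ∀ z ∈ ({a j, b j} : Set D),
        o j x y z = minoFun x y z) ∨
      (∀ x ∈ ({a j, b j} : Set D), ∀ y ∈ ({a j, b j} : Set D), ∀ z ∈ ({a j, b j} : Set D),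
        o j x y z = (if minoFun x y z = a j then b j else a j)) ∨
      (∀ x ∈ ({a j, b j} : Set D), ∀ y ∈ ({a j, b j} : Set D), ∀ z ∈ ({a j, b j} : Set D),
        o j x y z = a j) ∨
      (∀ x ∈ ({a j, b j} : Set D), ∀ y ∈ ({a j, b j} : Set D), ∀ z ∈ ({a j, b j} : Set D),
        o j x y z = b j))
    (hopres : ∀ r ∈ ρ, ∀ s ∈ ρ, ∀ t ∈ ρ, (fun j => o j (r j) (s j) (t j)) ∈ ρ) :
    ∀ r ∈ ρ, ∀ s ∈ ρ, ∀ t ∈ ρ,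
      (fun j => if j ∈ Red then a j else o j (r j) (s j) (t j)) ∈ ρ := by
  intro r hr s hs t ht
  have key : ∀ S : Finset (Fin m), S ⊆ Red → ∃ u ∈ ρ,
      (∀ k ∈ S, u k = a k) ∧ ∀ k ∉ Red, u k = o k (r k) (s k) (t k) := by
    intro S
    induction S using Finset.induction_on with
    | empty =>
      intro _
      exact ⟨_, hopres r hr s hs t ht, by simp, fun k _ => rfl⟩
    | @insert j S hjS ih =>
      intro hsub
      have hjR : j ∈ Red := hsub (Finset.mem_insert_self j S)
      obtain ⟨u, hu, huS, hunR⟩ := ih (fun k hk => hsub (Finset.mem_insert_of_mem hk))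
      obtain ⟨_, ⟨x, hx, hxj⟩, _⟩ := hred2 j hjR
      refine ⟨fun k => f (u k) (x k), hpoly u hu x hx, ?_, ?_⟩
      · intro k hk
        show f (u k) (x k) = a k
        rcases Finset.mem_insert.1 hk with hkj | hkS
        · subst hkj
          rw [hxj]
          rcases hcover k u hu with h | h <;> rw [h]
          · exact (hfR k hjR).1
          · exact (hfR k hjR).2.2.2
        · have hkR := hsub (Finset.mem_insert_of_mem hkS)
          rw [huS k hkS]
          rcases hcover k x hx with h | h <;> rw [h]
          · exact (hfR k hkR).1
          · exact (hfR k hkR).2.2.1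
      · intro k hkR
        show f (u k) (x k) = _
        rw [hfnR k hkR (u k) ?_ (x k) ?_, hunR k hkR]
        · rcases hcover k u hu with h | h <;> simp [h]
        · rcases hcover k x hx with h | h <;> simp [h]
  obtain ⟨u, hu, h1, h2⟩ := key Red (subset_refl Red)
  have heq : (fun j => if j ∈ Red then a j else o j (r j) (s j) (t j)) = u := by
    funext k
    by_cases hk : k ∈ Red
    · simp [hk, (h1 k hk).symm]
    · simp [hk, (h2 k hk).symm]
  rw [heq]; exact hu
end

section
/- Let D be a finite set whose two-element subsets are partitioned into classes called red, yellow and blue, and let f : D² → D, g, h : D³ → D be conservative operations (f(x,y) ∈ {x,y} and g(x,y,z), h(x,y,z) ∈ {x,y,z} for all arguments) such that for every two-element subset B ⊆ D: f|_B is a semilattice operation if B is red and f|_B(x,y) = x otherwise; g|_B is a majority operation if B is yellow, g|_B(x,y,z) = x if B is blue, and g|_B(x,y,z) = f|_B(f|_B(x,y),z) if B is red; h|_B is the minority (affine) operation if B is blue, h|_B(x,y,z) = x if B is yellow, and h|_B(x,y,z) = f|_B(f|_B(x,y),z) if B is red. Then the operation w(x,y,z) := g(h(x,y,z), y, z) is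 a weak near-unanimity operation on D: w(x,x,x) = x and w(x,x,y) = w(x,y,x) = w(y,x,x) for all x, y ∈ D. -/
/-- Bulatov's three polymorphisms for conservative languages yield a weak near-unanimity
operation: with the two-element subsets of `D` partitioned into red, yellow and blue
classes and conservative `f, g, h` as in Bulatov's theorem, the operation
`w(x,y,z) = g(h(x,y,z),y,z)` satisfies `w(x,x,x) = x` and
`w(x,x,y) = w(x,y,x) = w(y,x,x)` for all `x, y ∈ D`. -/
theorem stmt13 {D : Type*} [Fintype D]
    (Red Yellow Blue : D → D → Prop)
    (hRsymm : ∀ x y, Red x y → Red y x)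
    (hYsymm : ∀ x y, Yellow x y → Yellow y x)
    (hBsymm : ∀ x y, Blue x y → Blue y x)
    (htri : ∀ x y : D, x ≠ y → Red x y ∨ Yellow x y ∨ Blue x y)
    (hRY : ∀ x y, ¬(Red x y ∧ Yellow x y))
    (hRB : ∀ x y, ¬(Red x y ∧ Blue x y))
    (hYB : ∀ x y, ¬(Yellow x y ∧ Blue x y))
    (f : D → D → D) (g h : D → D → D → D)
    (hfcons : ∀ x y, f x y = x ∨ f x y = y)
    (hgcons : ∀ x y z, g x y z = x ∨ g x y z = y ∨ g x y z = z)
    (hhcons : ∀ x y z, h x y z = x ∨ h x y z = y ∨ h x y z = z)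
    -- f is a semilattice operation on red pairs
    (hfR : ∀ p q, Red p q →
      (∀ x ∈ ({p, q} : Set D), ∀ y ∈ ({p, q} : Set D), f x y = f y x) ∧
      (∀ x ∈ ({p, q} : Set D), f x x = x) ∧
      (∀ x ∈ ({p, q} : Set D), ∀ y ∈ ({p, q} : Set D), ∀ z ∈ ({p, q} : Set D),
        f (f x y) z = f x (f y z)))
    -- f is the first projection on non-red pairs
    (hfnR : ∀ p q : D, p ≠ q → ¬Red p q →
      ∀ x ∈ ({p, q} : Set D), ∀ y ∈ ({p, q} : Set D), f x y = x)
    -- g is a majority operation on yellow pairs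
    (hgY : ∀ p q, Yellow p q → ∀ x ∈ ({p, q} : Set D), ∀ y ∈ ({p, q} : Set D),
      g x x y = x ∧ g x y x = x ∧ g y x x = x)
    -- g is the first projection on blue pairs
    (hgB : ∀ p q, Blue p q → ∀ x ∈ ({p, q} : Set D), ∀ y ∈ ({p, q} : Set D),
      ∀ z ∈ ({p, q} : Set D), g x y z = x)
    -- g(x,y,z) = f(f(x,y),z) on red pairs
    (hgR : ∀ p q, Red p q → ∀ x ∈ ({p, q} : Set D), ∀ y ∈ ({p, q} : Set D),
      ∀ z ∈ ({p, q} : Set D), g x y z = f (f x y) z)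
    -- h is the minority (affine) operation on blue pairs
    (hhB : ∀ p q, Blue p q → ∀ x ∈ ({p, q} : Set D), ∀ y ∈ ({p, q} : Set D),
      h x x y = y ∧ h x y x = y ∧ h y x x = y)
    -- h is the first projection on yellow pairs
    (hhY : ∀ p q, Yellow p q → ∀ x ∈ ({p, q} : Set D), ∀ y ∈ ({p, q} : Set D),
      ∀ z ∈ ({p, q} : Set D), h x y z = x)
    -- h(x,y,z) = f(f(x,y),z) on red pairs
    (hhR : ∀ p q, Red p q → ∀ x ∈ ({p, q} : Set D), ∀ y ∈ ({p, q} : Set D),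
      ∀ z ∈ ({p, q} : Set D), h x y z = f (f x y) z)
    (w : D → D → D → D) (hw : ∀ x y z, w x y z = g (h x y z) y z) :
    (∀ x : D, w x x x = x) ∧
    ∀ x y : D, w x x y = w x y x ∧ w x x y = w y x x := by
  have hdiag : ∀ x : D, w x x x = x := by
    intro x
    have hx : h x x x = x := by rcases hhcons x x x with h1 | h1 | h1 <;> exact h1
    rw [hw, hx]
    rcases hgcons x x x with h1 | h1 | h1 <;> exact h1
  refine ⟨hdiag, ?_⟩
  intro x y
  by_cases hxy : x = y
  · subst hxy; simp [hdiag x]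
  have hmx : x ∈ ({x, y} : Set D) := by simp
  have hmy : y ∈ ({x, y} : Set D) := by simp
  rcases htri x y hxy with hR | hY | hB
  · -- red case
    obtain ⟨hcomm, hid, hassoc⟩ := hfR x y hR
    have hms : f x y ∈ ({x, y} : Set D) := by
      rcases hfcons x y with h1 | h1 <;> simp [h1]
    have hyx : f y x = f x y := hcomm y hmy x hmx
    have hsx : f (f x y) x = f x y := by
      rw [hassoc x hmx y hmy x hmx, hyx, ← hassoc x hmx x hmx y hmy, hid x hmx]
    have hsy : f (f x y) y = f x y := by
      rw [hassoc x hmx y hmy y hmy, hid y hmy]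
    have h1 : h x x y = f x y := by
      rw [hhR x y hR x hmx x hmx y hmy, hid x hmx]
    have h2 : h x y x = f x y := by
      rw [hhR x y hR x hmx y hmy x hmx, hsx]
    have h3 : h y x x = f x y := by
      rw [hhR x y hR y hmy x hmx x hmx, hyx, hsx]
    have g1 : g (f x y) x y = f x y := by
      rw [hgR x y hR (f x y) hms x hmx y hmy, hsx, hsy]
    have g2 : g (f x y) y x = f x y := by
      rw [hgR x y hR (f x y) hms y hmy x hmx, hsy, hsx]
    have g3 : g (f x y) x x = f x y := by
      rw [hgR x y hR (f x y) hms x hmx x hmx, hsx, hsx]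
    rw [hw, hw, hw, h1, h2, h3, g1, g2, g3]
    exact ⟨rfl, rfl⟩
  · -- yellow case
    obtain ⟨m1, m2, m3⟩ := hgY x y hY x hmx y hmy
    have h1 : h x x y = x := hhY x y hY x hmx x hmx y hmy
    have h2 : h x y x = x := hhY x y hY x hmx y hmy x hmx
    have h3 : h y x x = y := hhY x y hY y hmy x hmx x hmx
    rw [hw, hw, hw, h1, h2, h3, m1, m2, m3]
    exact ⟨rfl, rfl⟩
  · -- blue case
    obtain ⟨n1, n2, n3⟩ := hhB x y hB x hmx y hmy
    have g1 : g y x y = y := hgB x y hB y hmy x hmx y hmy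
    have g2 : g y y x = y := hgB x y hB y hmy y hmy x hmx
    have g3 : g y x x = y := hgB x y hB y hmy x hmx x hmx
    rw [hw, hw, hw, n1, n2, n3, g1, g2, g3]
    exact ⟨rfl, rfl⟩
end

section
/- Let D be a finite set whose two-element subsets are partitioned into classes called red and yellow (no blue class), and let f : D² → D, g, h : D³ → D be conservative operations (f(x,y) ∈ {x,y} and g(x,y,z), h(x,y,z) ∈ {x,y,z}) such that for every two-element subset B ⊆ D: f|_B is a semilattice operation if B is red and f|_B(x,y) = x otherwise; g|_B is a majority operation if B is yellow and g|_B(x,y,z) = f|_B(f|_B(x,y),z) if B is red; h|_B(x,y,z) = x if B is yellow and h|_B(x,y,z) = f|_B(f|_B(x,y),z) if B is red. Define w(x,y,z) = g(h(x,y,z), y, z), w_3 = w, and w_{i+1}(x_1,…,x_{i+1}) = w(w_i(x_1,…,x_i), x_i, x_{i+1}) for i ≥ 3. Then for every n ≥ 3, w_n is a weak near-unanimity operation on D: w_n(x,…,x) = x and all the n values w_n(y,x,…,x), w_n(x,y,x,…,x), …, w_n(x,…,x,y) coincide, for all x, y ∈ D. -/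
/-- The sequence of operations `w_3 = w`,
`w_{i+1}(x_1,…,x_{i+1}) = w(w_i(x_1,…,x_i), x_i, x_{i+1})`;
here `wseq w N` is the operation `w_{N+3}` of arity `N + 3`. -/
def wseq {D : Type*} (w : D → D → D → D) : (N : ℕ) → (Fin (N + 3) → D) → D
  | 0 => fun x => w (x 0) (x 1) (x 2)
  | N + 1 => fun x =>
      w (wseq w N fun j => x j.castSucc) (x ⟨N + 2, by omega⟩) (x ⟨N + 3, by omega⟩)

lemma wconst {D : Type*} (w : D → D → D → D) (c : D) (hc : w c c c = c) :
    ∀ M (v : Fin (M + 3) → D), (∀ j, v j = c) → wseq w M v = c := by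
  intro M
  induction M with
  | zero =>
    intro v hv
    show w (v 0) (v 1) (v 2) = c
    rw [hv 0, hv 1, hv 2]; exact hc
  | succ M ih =>
    intro v hv
    show w (wseq w M fun j => v j.castSucc) (v ⟨M + 2, by omega⟩) (v ⟨M + 3, by omega⟩) = c
    rw [ih _ (fun j => hv _), hv, hv]; exact hc

lemma yellow_aux {D : Type*} (x y : D) (w : D → D → D → D)
    (h0 : w x x x = x) (h1 : w y x x = x) (h2 : w x y x = x) (h3 : w x x y = x) :
    ∀ M (v : Fin (M + 3) → D), (∀ j, v j = x ∨ v j = y) →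
      (∀ j k, v j = y → v k = y → j = k) → wseq w M v = x := by
  intro M
  induction M with
  | zero =>
    intro v hv hu
    show w (v 0) (v 1) (v 2) = x
    rcases hv 0 with e0|e0 <;> rcases hv 1 with e1|e1 <;> rcases hv 2 with e2|e2 <;>
      rw [e0, e1, e2] <;>
      first
        | exact h0
        | exact h1
        | exact h2
        | exact h3
        | exact absurd (hu 0 1 e0 e1) (by decide)
        | exact absurd (hu 0 2 e0 e2) (by decide)
        | exact absurd (hu 1 2 e1 e2) (by decide)
  | succ M ih =>
    intro v hv hu
    show w (wseq w M fun j => v j.castSucc) (v ⟨M + 2, by omega⟩) (v ⟨M + 3, by omega⟩) = x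
    rw [ih _ (fun j => hv _) (fun j k hj hk => Fin.castSucc_injective _ (hu _ _ hj hk))]
    rcases hv ⟨M + 2, by omega⟩ with em|em <;> rcases hv ⟨M + 3, by omega⟩ with el|el <;>
      rw [em, el]
    · exact h0
    · exact h3
    · exact h2
    · exact absurd (hu _ _ em el) (by simp only [ne_eq, Fin.mk.injEq]; omega)

lemma red_aux {D : Type*} (x y : D) (f : D → D → D) (w : D → D → D → D)
    (hxy : x ≠ y)
    (fxx : f x x = x) (fyy : f y y = y) (fxy : f x y = x) (fyx : f y x = x)
    (key : ∀ a b c : D, (a = x ∨ a = y) → (b = x ∨ b = y) → (c = x ∨ c = y) →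
      w a b c = f (f a b) c) :
    ∀ M (v : Fin (M + 3) → D), (∀ j, v j = x ∨ v j = y) → (∃ j, v j = x) →
      wseq w M v = x := by
  have wxbc : ∀ b c : D, (b = x ∨ b = y) → (c = x ∨ c = y) → w x b c = x := by
    intro b c hb hc
    rw [key x b c (Or.inl rfl) hb hc]
    rcases hb with rfl|rfl <;> rcases hc with rfl|rfl <;> simp [fxx, fyy, fxy, fyx]
  have wyyy : w y y y = y := by
    rw [key y y y (Or.inr rfl) (Or.inr rfl) (Or.inr rfl), fyy, fyy]
  have wyyx : w y y x = x := by
    rw [key y y x (Or.inr rfl) (Or.inr rfl) (Or.inl rfl), fyy, fyx]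
  intro M
  induction M with
  | zero =>
    intro v hv hex
    obtain ⟨j, hj⟩ := hex
    show w (v 0) (v 1) (v 2) = x
    rw [key (v 0) (v 1) (v 2) (hv 0) (hv 1) (hv 2)]
    rcases hv 0 with e0|e0 <;> rcases hv 1 with e1|e1 <;> rcases hv 2 with e2|e2 <;>
      rw [e0, e1, e2] <;> simp only [fxx, fyy, fxy, fyx]
    exact (show v j = y by fin_cases j <;> assumption).symm.trans hj
  | succ M ih =>
    intro v hv hex
    show w (wseq w M fun j => v j.castSucc) (v ⟨M + 2, by omega⟩) (v ⟨M + 3, by omega⟩) = x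
    by_cases hex' : ∃ j : Fin (M + 3), v j.castSucc = x
    · rw [ih _ (fun j => hv _) hex']
      exact wxbc _ _ (hv _) (hv _)
    · push_neg at hex'
      have hvy : ∀ j : Fin (M + 3), v j.castSucc = y := fun j => (hv _).resolve_left (hex' j)
      have hvy' : ∀ j : Fin (M + 4), j.val < M + 3 → v j = y := by
        intro j hj
        have hh := hvy ⟨j.val, hj⟩
        have he : (⟨j.val, hj⟩ : Fin (M + 3)).castSucc = j := Fin.ext rfl
        rwa [he] at hh
      have hlast : v ⟨M + 3, by omega⟩ = x := by
        obtain ⟨j, hj⟩ := hex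
        rcases Nat.lt_or_ge j.val (M + 3) with hlt|hge
        · exact absurd (hj.symm.trans (hvy' j hlt)) hxy
        · have hje : j = ⟨M + 3, by omega⟩ := by
            apply Fin.ext
            show j.val = M + 3
            have := j.isLt; omega
          rw [← hje]; exact hj
      rw [wconst w y wyyy M _ hvy, hvy' ⟨M + 2, by omega⟩ (Nat.lt_succ_self (M + 2)), hlast]
      exact wyyx

/-- If there is no blue class (every two-element subset of `D` is red or yellow) and
`f, g, h` are Bulatov-style conservative operations, then every operation `w_n` (`n ≥ 3`)
built from `w(x,y,z) = g(h(x,y,z),y,z)` is a weak near-unanimity operation on `D`. -/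
theorem stmt14 {D : Type*} [Fintype D]
    (Red Yellow : D → D → Prop)
    (hRsymm : ∀ x y, Red x y → Red y x)
    (hYsymm : ∀ x y, Yellow x y → Yellow y x)
    (hdi : ∀ x y : D, x ≠ y → Red x y ∨ Yellow x y)
    (hRY : ∀ x y, ¬(Red x y ∧ Yellow x y))
    (f : D → D → D) (g h : D → D → D → D)
    (hfcons : ∀ x y, f x y = x ∨ f x y = y)
    (hgcons : ∀ x y z, g x y z = x ∨ g x y z = y ∨ g x y z = z)
    (hhcons : ∀ x y z, h x y z = x ∨ h x y z = y ∨ h x y z = z)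
    -- f is a semilattice operation on red pairs
    (hfR : ∀ p q, Red p q →
      (∀ x ∈ ({p, q} : Set D), ∀ y ∈ ({p, q} : Set D), f x y = f y x) ∧
      (∀ x ∈ ({p, q} : Set D), f x x = x) ∧
      (∀ x ∈ ({p, q} : Set D), ∀ y ∈ ({p, q} : Set D), ∀ z ∈ ({p, q} : Set D),
        f (f x y) z = f x (f y z)))
    -- f is the first projection on non-red pairs
    (hfnR : ∀ p q : D, p ≠ q → ¬Red p q →
      ∀ x ∈ ({p, q} : Set D), ∀ y ∈ ({p, q} : Set D), f x y = x)
    -- g is a majority operation on yellow pairs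
    (hgY : ∀ p q, Yellow p q → ∀ x ∈ ({p, q} : Set D), ∀ y ∈ ({p, q} : Set D),
      g x x y = x ∧ g x y x = x ∧ g y x x = x)
    -- g(x,y,z) = f(f(x,y),z) on red pairs
    (hgR : ∀ p q, Red p q → ∀ x ∈ ({p, q} : Set D), ∀ y ∈ ({p, q} : Set D),
      ∀ z ∈ ({p, q} : Set D), g x y z = f (f x y) z)
    -- h is the first projection on yellow pairs
    (hhY : ∀ p q, Yellow p q → ∀ x ∈ ({p, q} : Set D), ∀ y ∈ ({p, q} : Set D),
      ∀ z ∈ ({p, q} : Set D), h x y z = x)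
    -- h(x,y,z) = f(f(x,y),z) on red pairs
    (hhR : ∀ p q, Red p q → ∀ x ∈ ({p, q} : Set D), ∀ y ∈ ({p, q} : Set D),
      ∀ z ∈ ({p, q} : Set D), h x y z = f (f x y) z)
    (w : D → D → D → D) (hw : ∀ x y z, w x y z = g (h x y z) y z) :
    ∀ N : ℕ,
      (∀ x : D, wseq w N (fun _ => x) = x) ∧
      ∀ (x y : D) (p q : Fin (N + 3)),
        wseq w N (Function.update (fun _ => x) p y) =
          wseq w N (Function.update (fun _ => x) q y) := by
  have widem : ∀ a : D, w a a a = a := by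
    intro a
    rw [hw]
    have h1 : h a a a = a := by rcases hhcons a a a with e|e|e <;> exact e
    rw [h1]
    rcases hgcons a a a with e|e|e <;> exact e
  intro N
  constructor
  · exact fun a => wconst w a (widem a) N _ (fun _ => rfl)
  · intro x y p q
    by_cases hxy : x = y
    · subst hxy
      have hp : Function.update (fun _ : Fin (N + 3) => x) p x = fun _ => x :=
        Function.update_eq_self p _
      have hq : Function.update (fun _ : Fin (N + 3) => x) q x = fun _ => x :=
        Function.update_eq_self q _
      rw [hp, hq]
    · have mx : x ∈ ({x, y} : Set D) := Set.mem_insert _ _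
      have my : y ∈ ({x, y} : Set D) := Set.mem_insert_of_mem _ rfl
      have hval : ∀ (r : Fin (N + 3)) j, Function.update (fun _ => x) r y j = x ∨
          Function.update (fun _ => x) r y j = y := by
        intro r j
        rw [Function.update_apply]
        split_ifs <;> simp
      rcases hdi x y hxy with hR | hY
      · -- red pair
        obtain ⟨hcomm', hidem', -⟩ := hfR x y hR
        have fxx : f x x = x := hidem' x mx
        have fyy : f y y = y := hidem' y my
        have hcomm : f x y = f y x := hcomm' x mx y my
        have key : ∀ a b c : D, (a = x ∨ a = y) → (b = x ∨ b = y) → (c = x ∨ c = y) →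
            w a b c = f (f a b) c := by
          intro a b c ha hb hc
          have ma : a ∈ ({x, y} : Set D) := by rcases ha with rfl|rfl; exacts [mx, my]
          have mb : b ∈ ({x, y} : Set D) := by rcases hb with rfl|rfl; exacts [mx, my]
          have mc : c ∈ ({x, y} : Set D) := by rcases hc with rfl|rfl; exacts [mx, my]
          have hA : f (f a b) c = x ∨ f (f a b) c = y := by
            rcases hfcons (f a b) c with h2|h2
            · rw [h2]
              rcases hfcons a b with h1|h1
              · rw [h1]; exact ha
              · rw [h1]; exact hb
            · rw [h2]; exact hc
          have mA : f (f a b) c ∈ ({x, y} : Set D) := by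
            rcases hA with e|e
            · rw [e]; exact mx
            · rw [e]; exact my
          rw [hw, hhR x y hR a ma b mb c mc, hgR x y hR _ mA b mb c mc]
          rcases hfcons x y with hm|hm
          · have hyx : f y x = x := by rw [← hcomm]; exact hm
            rcases ha with rfl|rfl <;> rcases hb with rfl|rfl <;> rcases hc with rfl|rfl <;>
              simp [fxx, fyy, hm, hyx]
          · have hyx : f y x = y := by rw [← hcomm]; exact hm
            rcases ha with rfl|rfl <;> rcases hb with rfl|rfl <;> rcases hc with rfl|rfl <;>
              simp [fxx, fyy, hm, hyx]
        rcases hfcons x y with hm|hm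
        · have hyx : f y x = x := by rw [← hcomm]; exact hm
          have hres : ∀ r : Fin (N + 3),
              wseq w N (Function.update (fun _ => x) r y) = x := by
            intro r
            obtain ⟨j, hj⟩ := exists_ne r
            exact red_aux x y f w hxy fxx fyy hm hyx key N _ (hval r)
              ⟨j, Function.update_of_ne hj _ _⟩
          rw [hres p, hres q]
        · have hyx : f y x = y := by rw [← hcomm]; exact hm
          have hres : ∀ r : Fin (N + 3),
              wseq w N (Function.update (fun _ => x) r y) = y := by
            intro r
            exact red_aux y x f w (Ne.symm hxy) fyy fxx hyx hm
              (fun a b c ha hb hc => key a b c ha.symm hb.symm hc.symm) N _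
              (fun j => (hval r j).symm) ⟨r, Function.update_self _ _ _⟩
          rw [hres p, hres q]
      · -- yellow pair
        have w1 : w y x x = x := by
          rw [hw, hhY x y hY y my x mx x mx]
          exact (hgY x y hY x mx y my).2.2
        have w2 : w x y x = x := by
          rw [hw, hhY x y hY x mx y my x mx]
          exact (hgY x y hY x mx y my).2.1
        have w3 : w x x y = x := by
          rw [hw, hhY x y hY x mx x mx y my]
          exact (hgY x y hY x mx y my).1
        have hres : ∀ r : Fin (N + 3),
            wseq w N (Function.update (fun _ => x) r y) = x := by
          intro r
          apply yellow_aux x y w (widem x) w1 w2 w3 N _ (hval r)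
          intro j k hj hk
          have hgen : ∀ i, Function.update (fun _ : Fin (N + 3) => x) r y i = y → i = r := by
            intro i hi
            by_contra hne
            rw [Function.update_of_ne hne] at hi
            exact hxy hi
          rw [hgen j hj, hgen k hk]
        rw [hres p, hres q]
end

section
/- Let D be a finite set whose two-element subsets are partitioned into classes called red, yellow and blue, and let f : D² → D, g, h : D³ → D be conservative operations (f(x,y) ∈ {x,y} and g(x,y,z), h(x,y,z) ∈ {x,y,z}) such that for every two-element subset B ⊆ D: f|_B is a semilattice operation if B is red and f|_B(x,y) = x otherwise; g|_B is a majority operation if B is yellow, g|_B(x,y,z) = x if B is blue, and g|_B(x,y,z) = f|_B(f|_B(x,y),z) if B is red; h|_B is the minority (affine) operation if B is blue, h|_B(x,y,z) = x if B is yellow, and h|_B(x,y,z) = f|_B(f|_B(x,y),z) if B is red. Define w(x,y,z) = g(h(x,y,z), y, z) and u(x,y) = w(x,x,y). Then for every two-element subset B ⊆ D: (a) if B is yellow, then u(p,q) = p for all p, q ∈ B; (b) if B is blue, then u(p,q) = q for all p, q ∈ B and w(x,y,z) = μ_B(x,y,z) for all x, y, z ∈ B; consequently, for blue B, u(q, w(x,y,z))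 = μ_B(x,y,z) for all q, x, y, z ∈ B, and for yellow B, u(q, w(x,y,z)) = q for all q, x, y, z ∈ B. -/
/-- With Bulatov-style conservative operations `f, g, h` for a red/yellow/blue partition,
`w(x,y,z) = g(h(x,y,z),y,z)` and `u(x,y) = w(x,x,y)`, on every two-element subset
`B = {p,q}`: (a) if `B` is yellow then `u` is the first projection on `B`;
(b) if `B` is blue then `u` is the second projection on `B` and `w` is the minority
operation `μ_B` on `B`; consequently `u(q', w(x,y,z)) = μ_B(x,y,z)` on blue `B`, and
`u(q', w(x,y,z)) = q'` on yellow `B`. -/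
theorem stmt16 {D : Type*} [Fintype D] [DecidableEq D]
    (Red Yellow Blue : D → D → Prop)
    (hRsymm : ∀ x y, Red x y → Red y x)
    (hYsymm : ∀ x y, Yellow x y → Yellow y x)
    (hBsymm : ∀ x y, Blue x y → Blue y x)
    (htri : ∀ x y : D, x ≠ y → Red x y ∨ Yellow x y ∨ Blue x y)
    (hRY : ∀ x y, ¬(Red x y ∧ Yellow x y))
    (hRB : ∀ x y, ¬(Red x y ∧ Blue x y))
    (hYB : ∀ x y, ¬(Yellow x y ∧ Blue x y))
    (f : D → D → D) (g h : D → D → D → D)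
    (hfcons : ∀ x y, f x y = x ∨ f x y = y)
    (hgcons : ∀ x y z, g x y z = x ∨ g x y z = y ∨ g x y z = z)
    (hhcons : ∀ x y z, h x y z = x ∨ h x y z = y ∨ h x y z = z)
    (hfR : ∀ p q, Red p q →
      (∀ x ∈ ({p, q} : Set D), ∀ y ∈ ({p, q} : Set D), f x y = f y x) ∧
      (∀ x ∈ ({p, q} : Set D), f x x = x) ∧
      (∀ x ∈ ({p, q} : Set D), ∀ y ∈ ({p, q} : Set D), ∀ z ∈ ({p, q} : Set D),
        f (f x y) z = f x (f y z)))
    (hfnR : ∀ p q : D, p ≠ q → ¬Red p q →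
      ∀ x ∈ ({p, q} : Set D), ∀ y ∈ ({p, q} : Set D), f x y = x)
    (hgY : ∀ p q, Yellow p q → ∀ x ∈ ({p, q} : Set D), ∀ y ∈ ({p, q} : Set D),
      g x x y = x ∧ g x y x = x ∧ g y x x = x)
    (hgB : ∀ p q, Blue p q → ∀ x ∈ ({p, q} : Set D), ∀ y ∈ ({p, q} : Set D),
      ∀ z ∈ ({p, q} : Set D), g x y z = x)
    (hgR : ∀ p q, Red p q → ∀ x ∈ ({p, q} : Set D), ∀ y ∈ ({p, q} : Set D),
      ∀ z ∈ ({p, q} : Set D), g x y z = f (f x y) z)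
    (hhB : ∀ p q, Blue p q → ∀ x ∈ ({p, q} : Set D), ∀ y ∈ ({p, q} : Set D),
      h x x y = y ∧ h x y x = y ∧ h y x x = y)
    (hhY : ∀ p q, Yellow p q → ∀ x ∈ ({p, q} : Set D), ∀ y ∈ ({p, q} : Set D),
      ∀ z ∈ ({p, q} : Set D), h x y z = x)
    (hhR : ∀ p q, Red p q → ∀ x ∈ ({p, q} : Set D), ∀ y ∈ ({p, q} : Set D),
      ∀ z ∈ ({p, q} : Set D), h x y z = f (f x y) z)
    (w : D → D → D → D) (hw : ∀ x y z, w x y z = g (h x y z) y z)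
    (u : D → D → D) (hu : ∀ x y, u x y = w x x y) :
    -- (a) on yellow pairs u is the first projection
    (∀ p q, Yellow p q →
      ∀ x ∈ ({p, q} : Set D), ∀ y ∈ ({p, q} : Set D), u x y = x) ∧
    -- (b) on blue pairs u is the second projection and w is the minority operation
    (∀ p q, Blue p q →
      (∀ x ∈ ({p, q} : Set D), ∀ y ∈ ({p, q} : Set D), u x y = y) ∧
      (∀ x ∈ ({p, q} : Set D), ∀ y ∈ ({p, q} : Set D), ∀ z ∈ ({p, q} : Set D),
        w x y z = minoFun x y z) ∧
      (∀ q' ∈ ({p, q} : Set D), ∀ x ∈ ({p, q} : Set D), ∀ y ∈ ({p, q} : Set D),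
        ∀ z ∈ ({p, q} : Set D), u q' (w x y z) = minoFun x y z)) ∧
    -- consequence on yellow pairs
    (∀ p q, Yellow p q →
      ∀ q' ∈ ({p, q} : Set D), ∀ x ∈ ({p, q} : Set D), ∀ y ∈ ({p, q} : Set D),
        ∀ z ∈ ({p, q} : Set D), u q' (w x y z) = q') := by
  have hp : ∀ p q : D, p ∈ ({p, q} : Set D) := by intro p q; simp
  have hq : ∀ p q : D, q ∈ ({p, q} : Set D) := by intro p q; simp
  have hwmem : ∀ x y z : D, w x y z = x ∨ w x y z = y ∨ w x y z = z := by
    intro x y z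
    rw [hw]
    rcases hgcons (h x y z) y z with h1 | h1 | h1
    · rw [h1]; exact hhcons x y z
    · simp [h1]
    · simp [h1]
  have hYproj : ∀ p q, Yellow p q →
      ∀ x ∈ ({p, q} : Set D), ∀ y ∈ ({p, q} : Set D), u x y = x := by
    intro p q hY x hx y hy
    rw [hu, hw, hhY p q hY x hx x hx y hy, (hgY p q hY x hx y hy).1]
  have hBu : ∀ p q, Blue p q →
      ∀ x ∈ ({p, q} : Set D), ∀ y ∈ ({p, q} : Set D), u x y = y := by
    intro p q hB x hx y hy
    rw [hu, hw, (hhB p q hB x hx y hy).1, hgB p q hB y hy x hx y hy]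
  have hBw : ∀ p q, Blue p q →
      ∀ x ∈ ({p, q} : Set D), ∀ y ∈ ({p, q} : Set D), ∀ z ∈ ({p, q} : Set D),
        w x y z = minoFun x y z := by
    intro p q hB x hx y hy z hz
    have hmem : h x y z ∈ ({p, q} : Set D) := by
      rcases hhcons x y z with h2 | h2 | h2 <;> rw [h2] <;> assumption
    rw [hw, hgB p q hB _ hmem y hy z hz]
    by_cases hpq : p = q
    · subst hpq
      simp only [Set.mem_insert_iff, Set.mem_singleton_iff, or_self] at hx hy hz
      rw [hx, hy, hz, (hhB p p hB p (hp p p) p (hp p p)).1]; simp [minoFun]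
    · simp only [Set.mem_insert_iff, Set.mem_singleton_iff] at hx hy hz
      have hqp : q ≠ p := Ne.symm hpq
      have hpm := hp p q; have hqm := hq p q
      rcases hx with hx | hx <;> rcases hy with hy | hy <;> rcases hz with hz | hz <;>
        rw [hx, hy, hz]
      · rw [(hhB p q hB p hpm p hpm).1]; simp [minoFun]
      · rw [(hhB p q hB p hpm q hqm).1]; simp [minoFun]
      · rw [(hhB p q hB p hpm q hqm).2.1]; simp [minoFun, hpq, hqp]
      · rw [(hhB p q hB q hqm p hpm).2.2]; simp [minoFun, hpq, hqp]
      · rw [(hhB p q hB p hpm q hqm).2.2]; simp [minoFun, hpq, hqp]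
      · rw [(hhB p q hB q hqm p hpm).2.1]; simp [minoFun, hpq, hqp]
      · rw [(hhB p q hB q hqm p hpm).1]; simp [minoFun]
      · rw [(hhB p q hB q hqm q hqm).1]; simp [minoFun]
  refine ⟨hYproj, ?_, ?_⟩
  · intro p q hB
    refine ⟨hBu p q hB, hBw p q hB, ?_⟩
    intro q' hq' x hx y hy z hz
    have hm : w x y z ∈ ({p, q} : Set D) := by
      rcases hwmem x y z with h2 | h2 | h2 <;> rw [h2] <;> assumption
    rw [hBu p q hB q' hq' _ hm, hBw p q hB x hx y hy z hz]
  · intro p q hY q' hq' x hx y hy z hz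
    have hm : w x y z ∈ ({p, q} : Set D) := by
      rcases hwmem x y z with h2 | h2 | h2 <;> rw [h2] <;> assumption
    exact hYproj p q hY q' hq' _ hm
end
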